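/- For every k ∈ ℕ one has the identity P_{(0,k+1)}(s,t) = P_{(1,k)}(s,t) − s·P_{(2,k−1)}(s,t) in ℤ[s,t], and for every j with 0 ≤ j ≤ k−1 the identity t·P_{(j,k+1−j)}(s,t) = P_{(j+1,k−j)}(s,t) − P_{(j+2,k−j−1)}(s,t) + s·P_{(j+3,k−j−2)}(s,t), where by convention P_μ = 0 whenever μ ∉ ℕ₀². -/

import Mathlib

open MvPolynomial

noncomputable section

abbrev Rxy : Type := MvPolynomial (Fin 2) ℤ

/-- The fraction field of ℤ[x,y]. -/
abbrev Kxy : Type := FractionRing Rxy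

/-- The image of `x` in the fraction field. -/
noncomputable def xx : Kxy := algebraMap Rxy Kxy (X 0)

/-- The image of `y` in the fraction field. -/
noncomputable def yy : Kxy := algebraMap Rxy Kxy (X 1)

/-- `s = x / y²`. -/
noncomputable def sv : Kxy := xx / yy ^ 2

/-- `t = y / x²`. -/
noncomputable def tv : Kxy := yy / xx ^ 2

/-- Evaluation of a two-variable integer polynomial at `(s, t)` in the fraction field. -/
noncomputable def evST (p : Rxy) : Kxy := aeval ![sv, tv] p

/-- Defining properties of the SU(3) character polynomials `Q a b`
(with the convention `Q a b = 0` whenever `(a, b) ∉ ℕ₀²`). -/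
def IsQSU3 (Q : ℤ → ℤ → Rxy) : Prop :=
  (∀ a b : ℤ, (a < 0 ∨ b < 0) → Q a b = 0) ∧
  Q 0 0 = 1 ∧
  Q 1 0 = X 0 ∧
  (∀ a b : ℤ, 0 ≤ a → 0 ≤ b →
    X 0 * Q a b = Q (a + 1) b + Q a (b - 1) + Q (a - 1) (b + 1)) ∧
  (∀ a b : ℤ, rename (Equiv.swap (0 : Fin 2) 1) (Q a b) = Q b a)

/-- Defining property of the polynomials `P a b` (in the variables `s, t`), namely
`P_λ(x/y², y/x²) = x^{-λ₁} y^{-λ₂} Q_λ(x,y)` in the fraction field of ℤ[x,y]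
(with the convention `P a b = 0` whenever `(a, b) ∉ ℕ₀²`). -/
def IsPSU3 (Q P : ℤ → ℤ → Rxy) : Prop :=
  (∀ a b : ℤ, (a < 0 ∨ b < 0) → P a b = 0) ∧
  (∀ a b : ℤ, 0 ≤ a → 0 ≤ b →
    evST (P a b) = algebraMap Rxy Kxy (Q a b) / (xx ^ a * yy ^ b))

/-!
Since `s t = (x y)⁻¹` and `t = y / x²`, dividing the recursion `x Q_λ = Q_{λ+(1,0)} + Q_{λ+(0,-1)} +
Q_{λ+(-1,1)}` and its mirror image under `x ↔ y` by the appropriate monomial turns them into the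
recursions `P_λ = P_{λ+(1,0)} + s t P_{λ+(0,-1)} + t P_{λ+(-1,1)}` and
`P_λ = P_{λ+(0,1)} + s t P_{λ+(-1,0)} + s P_{λ+(1,-1)}`, valid in `ℤ[s,t]` because `s` and `t` are
algebraically independent. Each identity of the theorem is the difference of one instance of
each of these.
-/

lemma xx_ne_zero : xx ≠ 0 :=
  (map_ne_zero_iff _ (IsFractionRing.injective Rxy Kxy)).2 (X_ne_zero 0)

lemma yy_ne_zero : yy ≠ 0 :=
  (map_ne_zero_iff _ (IsFractionRing.injective Rxy Kxy)).2 (X_ne_zero 1)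

@[simp] lemma evST_add (p q : Rxy) : evST (p + q) = evST p + evST q := map_add _ p q

@[simp] lemma evST_mul (p q : Rxy) : evST (p * q) = evST p * evST q := map_mul _ p q

@[simp] lemma evST_X_zero : evST (X 0) = sv := by simp [evST]

@[simp] lemma evST_X_one : evST (X 1) = tv := by simp [evST]

/-- `(x y)^(2n) s^(d₀) t^(d₁) = x^(2n + d₀ - 2d₁) y^(2n + d₁ - 2d₀)`; the truncated subtractions
are honest as long as `d₀, d₁ ≤ n`. -/
def clearedExponent (n : ℕ) (d : Fin 2 →₀ ℕ) : Fin 2 →₀ ℕ :=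
  Finsupp.equivFunOnFinite.symm ![2 * n + d 0 - 2 * d 1, 2 * n + d 1 - 2 * d 0]

lemma clearedExponent_injOn (n : ℕ) :
    Set.InjOn (clearedExponent n) {d | ∀ i, d i ≤ n} := by
  intro d hd e he h
  have h0 := congrArg (· 0) h
  have h1 := congrArg (· 1) h
  have := hd 0; have := hd 1; have := he 0; have := he 1
  simp only [clearedExponent, Finsupp.coe_equivFunOnFinite_symm, Matrix.cons_val_zero,
    Matrix.cons_val_one] at h0 h1
  ext i
  fin_cases i <;> simp only [Fin.zero_eta, Fin.mk_one] <;> omega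

lemma pow_mul_evST_monomial (n : ℕ) (d : Fin 2 →₀ ℕ) (c : ℤ) (hd : ∀ i, d i ≤ n) :
    (xx * yy) ^ (2 * n) * evST (monomial d c) =
      algebraMap Rxy Kxy (monomial (clearedExponent n d) c) := by
  have := hd 0; have := hd 1
  rw [evST, aeval_monomial, monomial_eq, Finsupp.prod_fintype _ _ fun _ => pow_zero _,
    Finsupp.prod_fintype _ _ fun _ => pow_zero _]
  simp only [Fin.prod_univ_two, clearedExponent, Finsupp.coe_equivFunOnFinite_symm, map_mul,
    map_pow, Matrix.cons_val_zero, Matrix.cons_val_one, eq_intCast, map_intCast]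
  rw [← xx, ← yy, pow_sub₀ _ xx_ne_zero (by omega), pow_sub₀ _ yy_ne_zero (by omega), sv, tv]
  field_simp
  ring

lemma evST_injective : Function.Injective evST := by
  refine (injective_iff_map_eq_zero (aeval ![sv, tv] : Rxy →ₐ[ℤ] Kxy)).2 fun p hp => ?_
  set n := p.totalDegree
  have hbox : ∀ d ∈ p.support, ∀ i, d i ≤ n := fun d hd i =>
    (monomial_le_degreeOf i hd).trans (degreeOf_le_totalDegree p i)
  set q := ∑ d ∈ p.support, monomial (clearedExponent n d) (coeff d p)
  have hq : algebraMap Rxy Kxy q = (xx * yy) ^ (2 * n) * evST p := by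
    conv_rhs => rw [p.as_sum]
    simp only [q, map_sum, evST, Finset.mul_sum]
    exact Finset.sum_congr rfl fun d hd => (pow_mul_evST_monomial n d _ (hbox d hd)).symm
  rw [evST, hp, mul_zero, map_eq_zero_iff _ (IsFractionRing.injective Rxy Kxy)] at hq
  ext d
  by_contra hd
  have hcoeff : coeff (clearedExponent n d) q = coeff d p := by
    rw [coeff_sum, Finset.sum_eq_single_of_mem d (mem_support_iff.2 hd)]
    · rw [coeff_monomial, if_pos rfl]
    · intro e he hne
      rw [coeff_monomial, if_neg fun h => hne (clearedExponent_injOn n (hbox e he)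
        (hbox d (mem_support_iff.2 hd)) h)]
  rw [hq, coeff_zero] at hcoeff
  exact hd hcoeff.symm

lemma IsQSU3.X_one_mul_eq {Q : ℤ → ℤ → Rxy} (hQ : IsQSU3 Q) {a b : ℤ} (ha : 0 ≤ a) (hb : 0 ≤ b) :
    X 1 * Q a b = Q a (b + 1) + Q (a - 1) b + Q (a + 1) (b - 1) := by
  obtain ⟨-, -, -, hrec, hswap⟩ := hQ
  have h := congrArg (rename (Equiv.swap (0 : Fin 2) 1)) (hrec b a hb ha)
  simpa only [map_mul, map_add, rename_X, Equiv.swap_apply_left, hswap] using h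

lemma IsPSU3.evST_eq {Q P : ℤ → ℤ → Rxy} (hQ : IsQSU3 Q) (hP : IsPSU3 Q P) (a b : ℤ) :
    evST (P a b) = algebraMap Rxy Kxy (Q a b) / (xx ^ a * yy ^ b) := by
  by_cases h : a < 0 ∨ b < 0
  · simp [hP.1 a b h, hQ.1 a b h, evST]
  · push Not at h
    exact hP.2 a b h.1 h.2

lemma IsPSU3.x_recurrence {Q P : ℤ → ℤ → Rxy} (hQ : IsQSU3 Q) (hP : IsPSU3 Q P) {a b : ℤ}
    (ha : 0 ≤ a) (hb : 0 ≤ b) :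
    P a b = P (a + 1) b + X 0 * X 1 * P a (b - 1) + X 1 * P (a - 1) (b + 1) := by
  have h := congrArg (algebraMap Rxy Kxy) (hQ.2.2.2.1 a b ha hb)
  simp only [map_add, map_mul, ← xx.eq_1] at h
  have hx := xx_ne_zero
  have hy := yy_ne_zero
  apply evST_injective
  simp only [evST_add, evST_mul, evST_X_zero, evST_X_one, hP.evST_eq hQ, zpow_add_one₀ hx,
    zpow_sub_one₀ hx, zpow_add_one₀ hy, zpow_sub_one₀ hy, sv, tv]
  field_simp
  linear_combination h

lemma IsPSU3.y_recurrence {Q P : ℤ → ℤ → Rxy} (hQ : IsQSU3 Q) (hP : IsPSU3 Q P) {a b : ℤ}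
    (ha : 0 ≤ a) (hb : 0 ≤ b) :
    P a b = P a (b + 1) + X 0 * X 1 * P (a - 1) b + X 0 * P (a + 1) (b - 1) := by
  have h := congrArg (algebraMap Rxy Kxy) (hQ.X_one_mul_eq ha hb)
  simp only [map_add, map_mul, ← yy.eq_1] at h
  have hx := xx_ne_zero
  have hy := yy_ne_zero
  apply evST_injective
  simp only [evST_add, evST_mul, evST_X_zero, evST_X_one, hP.evST_eq hQ, zpow_add_one₀ hx,
    zpow_sub_one₀ hx, zpow_add_one₀ hy, zpow_sub_one₀ hy, sv, tv]
  field_simp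
  linear_combination h

theorem stmt_6_general (Q P : ℤ → ℤ → Rxy) (hQ : IsQSU3 Q) (hP : IsPSU3 Q P) (k : ℕ) :
    (P 0 ((k : ℤ) + 1) = P 1 (k : ℤ) - X 0 * P 2 ((k : ℤ) - 1)) ∧
    ∀ j : ℕ, (j : ℤ) ≤ (k : ℤ) - 1 →
      X 1 * P (j : ℤ) ((k : ℤ) + 1 - j) =
        P ((j : ℤ) + 1) ((k : ℤ) - j) - P ((j : ℤ) + 2) ((k : ℤ) - j - 1) +
          X 0 * P ((j : ℤ) + 3) ((k : ℤ) - j - 2) := by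
  constructor
  · have hx := hP.x_recurrence hQ (a := 0) (b := k + 1) le_rfl (by positivity)
    have hy := hP.y_recurrence hQ (a := 1) (b := k) zero_le_one (by positivity)
    rw [hP.1 (0 - 1) _ (by norm_num)] at hx
    ring_nf at hx hy ⊢
    linear_combination hx - hy
  · intro j hj
    have hx := hP.x_recurrence hQ (a := j + 1) (b := k - j) (by positivity) (by omega)
    have hy := hP.y_recurrence hQ (a := j + 2) (b := k - j - 1) (by positivity) (by omega)
    ring_nf at hx hy ⊢
    linear_combination hy - hx

theorem stmt_6 (Q P : ℤ → ℤ → Rxy) (hQ : IsQSU3 Q) (hP : IsPSU3 Q P) (k : ℕ) (hk : 1 ≤ k) :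
    (P 0 ((k : ℤ) + 1) = P 1 (k : ℤ) - X 0 * P 2 ((k : ℤ) - 1)) ∧
    ∀ j : ℕ, (j : ℤ) ≤ (k : ℤ) - 1 →
      X 1 * P (j : ℤ) ((k : ℤ) + 1 - j) =
        P ((j : ℤ) + 1) ((k : ℤ) - j) - P ((j : ℤ) + 2) ((k : ℤ) - j - 1) +
          X 0 * P ((j : ℤ) + 3) ((k : ℤ) - j - 2) :=
  stmt_6_general Q P hQ hP k
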